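/- arXiv:1703.03092 — 2 statements merged into one kernel-verified Lean document; each statement's English description precedes it below -/
import Mathlib

section
/- Let n be a nonnegative integer and T an integer with T ≡ n (mod 2). If 4n − T² is a sum of three integer squares, then there exist integers a, b, c, d with a² + b² + c² + d² = n and a + b + c + d = T. -/
/-!
Write `4 n = T² + A² + B² + C²`. Squares are `0` or `1` mod `4` according to parity, so `T, A, B, C`
all have the same parity. Replacing `A` by `-A` if necessary (only needed when they are odd; when they
are even, `T ≡ n (mod 2)` does the job), `4 ∣ T + A + B + C`, hence `4` divides every `T ± A ± B ± C`
with an even number of minus signs. These four quarters are `a, b, c, d`: the rows of the `4 × 4`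
Hadamard matrix are orthogonal of squared length `4`, so `a² + b² + c² + d² = 4 n / 4 = n`, and the
column sums give `a + b + c + d = T`.
-/

theorem Int.sq_emod_four_eq_emod_two (x : ℤ) : x ^ 2 % 4 = x % 2 := by
  rcases Int.even_or_odd' x with ⟨k, rfl | rfl⟩
  · have : (2 * k) ^ 2 = 4 * k ^ 2 := by ring
    omega
  · have : (2 * k + 1) ^ 2 = 4 * (k ^ 2 + k) + 1 := by ring
    omega

theorem Int.modEq_two_of_four_dvd_sum_four_sq {T A B C : ℤ}
    (h : 4 ∣ T ^ 2 + A ^ 2 + B ^ 2 + C ^ 2) :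
    A ≡ T [ZMOD 2] ∧ B ≡ T [ZMOD 2] ∧ C ≡ T [ZMOD 2] := by
  have := Int.sq_emod_four_eq_emod_two T
  have := Int.sq_emod_four_eq_emod_two A
  have := Int.sq_emod_four_eq_emod_two B
  have := Int.sq_emod_four_eq_emod_two C
  unfold Int.ModEq
  omega

theorem Int.exists_sum_four_sq_eq_of_four_dvd_add {n T A B C : ℤ}
    (hsq : T ^ 2 + A ^ 2 + B ^ 2 + C ^ 2 = 4 * n)
    (hA : A ≡ T [ZMOD 2]) (hB : B ≡ T [ZMOD 2]) (hC : C ≡ T [ZMOD 2])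
    (h4 : 4 ∣ T + A + B + C) :
    ∃ a b c d : ℤ, a ^ 2 + b ^ 2 + c ^ 2 + d ^ 2 = n ∧ a + b + c + d = T := by
  unfold Int.ModEq at hA hB hC
  obtain ⟨a, ha⟩ := h4
  obtain ⟨b, hb⟩ : 4 ∣ T + A - B - C := by omega
  obtain ⟨c, hc⟩ : 4 ∣ T - A + B - C := by omega
  obtain ⟨d, hd⟩ : 4 ∣ T - A - B + C := by omega
  refine ⟨a, b, c, d, ?_, by linarith⟩
  have h16 : 16 * (a ^ 2 + b ^ 2 + c ^ 2 + d ^ 2) = 16 * n := by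
    linear_combination (-(T + A + B + C) - 4 * a) * ha + (-(T + A - B - C) - 4 * b) * hb
      + (-(T - A + B - C) - 4 * c) * hc + (-(T - A - B + C) - 4 * d) * hd + 4 * hsq
  linarith

theorem Int.four_dvd_add_of_sum_four_sq_of_even {n T A B C : ℤ}
    (hsq : T ^ 2 + A ^ 2 + B ^ 2 + C ^ 2 = 4 * n) (hpar : T ≡ n [ZMOD 2])
    (hA : A ≡ T [ZMOD 2]) (hB : B ≡ T [ZMOD 2]) (hC : C ≡ T [ZMOD 2]) (hT : T % 2 = 0) :
    4 ∣ T + A + B + C := by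
  unfold Int.ModEq at hpar hA hB hC
  obtain ⟨t, rfl⟩ : 2 ∣ T := by omega
  obtain ⟨α, rfl⟩ : 2 ∣ A := by omega
  obtain ⟨β, rfl⟩ : 2 ∣ B := by omega
  obtain ⟨γ, rfl⟩ : 2 ∣ C := by omega
  have hn : t ^ 2 + α ^ 2 + β ^ 2 + γ ^ 2 = n := by linarith
  have := Int.sq_emod_four_eq_emod_two t
  have := Int.sq_emod_four_eq_emod_two α
  have := Int.sq_emod_four_eq_emod_two β
  have := Int.sq_emod_four_eq_emod_two γ
  omega

theorem converse_direction_general (n T : ℤ) (hpar : T ≡ n [ZMOD 2])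
    (h : ∃ A B C : ℤ, A^2 + B^2 + C^2 = 4 * n - T^2) :
    ∃ a b c d : ℤ, a^2 + b^2 + c^2 + d^2 = n ∧ a + b + c + d = T := by
  obtain ⟨A, B, C, hABC⟩ := h
  have hsq : T ^ 2 + A ^ 2 + B ^ 2 + C ^ 2 = 4 * n := by linarith
  obtain ⟨hA, hB, hC⟩ := Int.modEq_two_of_four_dvd_sum_four_sq (hsq ▸ dvd_mul_right 4 n)
  rcases Int.emod_two_eq_zero_or_one T with hT | hT
  · exact Int.exists_sum_four_sq_eq_of_four_dvd_add hsq hA hB hC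
      (Int.four_dvd_add_of_sum_four_sq_of_even hsq hpar hA hB hC hT)
  · have hneg : -A ≡ T [ZMOD 2] := by unfold Int.ModEq at *; omega
    have h4 : 4 ∣ T + A + B + C ∨ 4 ∣ T + -A + B + C := by unfold Int.ModEq at *; omega
    rcases h4 with h4 | h4
    · exact Int.exists_sum_four_sq_eq_of_four_dvd_add hsq hA hB hC h4
    · exact Int.exists_sum_four_sq_eq_of_four_dvd_add (by linear_combination hsq) hneg hB hC h4

theorem converse_direction (n T : ℤ) (hn : 0 ≤ n) (hpar : T ≡ n [ZMOD 2])
    (h : ∃ A B C : ℤ, A^2 + B^2 + C^2 = 4 * n - T^2) :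
    ∃ a b c d : ℤ, a^2 + b^2 + c^2 + d^2 = n ∧ a + b + c + d = T :=
  converse_direction_general n T hpar h
end

section
/- Let n be a positive integer not divisible by 4. Then S(n) = {T ∈ ℤ : T ≡ n (mod 2) and T² ≤ 4n}, where S(n) = {a+b+c+d : a,b,c,d ∈ ℤ, a²+b²+c²+d² = n}. -/
/-!
If `a² + b² + c² + d² = n` and `T = a + b + c + d`, then `T ≡ n (mod 2)` and
`4n - T² = ∑_{i<j} (aᵢ - aⱼ)² ≥ 0`. Conversely, `(a, b, c, d) ↦ (T, u, v, w) =
(a+b+c+d, a+b-c-d, a-b+c-d, a-b-c+d)` multiplies the sum of squares by `4` and is invertible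
when `u, v, w` have a common parity and `4 ∣ T + u + v + w`. So it suffices to write `4n - T²` as
`u² + v² + w²`: for odd `n` it is `≡ 3 (mod 8)`, which forces `u, v, w` odd (the sign of `u`
then fixes `T + u + v + w` modulo `4`), and for `n ≡ 2 (mod 4)` one writes
`n - (T/2)² ≡ 1, 2 (mod 4)` as a sum of three squares and doubles.

Three squares (Gauss, Dirichlet): `m` is the value at `e₂` of the form
`[[a, u, 0], [u, k, 1], [0, 1, m]]` of determinant `m (ak - u²) - a`, and Dirichlet's theorem on
primes in progressions together with quadratic reciprocity yields `a, u, k` making it positive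
definite of determinant `1`. Such a form is equivalent to `x² + y² + z²`: after moving a minimal
vector to `e₀` and reducing the first row, its minimum `μ` and the minimum `μ'` of the binary form
`μ •` (Schur complement of `μ`), of determinant `μ`, satisfy `3μ² ≤ 4μ'` and `3μ'² ≤ 4μ`,
so `μ = 1`, and the complementary binary form of determinant `1` reduces to `y² + z²` likewise.
-/

open Matrix

theorem Int.exists_abs_two_mul_add_mul_le (a : ℤ) {b : ℤ} (hb : 0 < b) :
    ∃ s, |2 * (a + b * s)| ≤ b := by
  refine ⟨-((2 * a + b) / (2 * b)), abs_le.2 ⟨?_, ?_⟩⟩ <;>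
  · have h1 := Int.emod_add_mul_ediv (2 * a + b) (2 * b)
    have h2 := Int.emod_nonneg (2 * a + b) (by omega : 2 * b ≠ 0)
    have h3 := Int.emod_lt_of_pos (2 * a + b) (by omega : 0 < 2 * b)
    linarith

theorem Int.exists_mul_isCoprime (x y : ℤ) :
    ∃ g x' y' : ℤ, IsCoprime x' y' ∧ x = g * x' ∧ y = g * y' := by
  rcases eq_or_ne (Int.gcd x y) 0 with h | h
  · obtain ⟨rfl, rfl⟩ := Int.gcd_eq_zero_iff.1 h
    exact ⟨0, 1, 0, isCoprime_one_left, by simp, by simp⟩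
  · obtain ⟨x', y', h1, hx, hy⟩ := Int.exists_gcd_one (Nat.pos_of_ne_zero h)
    exact ⟨_, x', y', Int.isCoprime_iff_gcd_eq_one.2 h1, hx.trans (mul_comm ..),
      hy.trans (mul_comm ..)⟩

theorem Int.sq_emod_cases (x : ℤ) : x % 2 = 1 ∧ x ^ 2 % 8 = 1 ∨ x % 2 = 0 ∧ x ^ 2 % 4 = 0 := by
  obtain ⟨k, hk | hk⟩ : ∃ k, x = 2 * k + 1 ∨ x = 2 * k := ⟨x / 2, by omega⟩
  · obtain ⟨e, he⟩ := Int.even_mul_succ_self k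
    have : x ^ 2 = 8 * e + 1 := by rw [hk]; linear_combination 4 * he
    omega
  · have : x ^ 2 = 4 * k ^ 2 := by rw [hk]; ring
    omega

def IsPrimitiveVector {ι : Type*} (v : ι → ℤ) : Prop := ∀ g : ℤ, (∀ i, g ∣ v i) → IsUnit g

namespace Matrix

theorem PosDef.isSymm {ι : Type*} {A : Matrix ι ι ℤ} (hA : A.PosDef) : A.IsSymm :=
  isHermitian_iff_isSymm.1 hA.1

variable {ι : Type*} [Fintype ι]

def valuesAtNonzero (A : Matrix ι ι ℤ) : Set ℤ := (fun v => v ⬝ᵥ A *ᵥ v) '' {v | v ≠ 0}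

theorem dotProduct_transpose_mul_mul_mulVec {R : Type*} [CommSemiring R] (A P : Matrix ι ι R)
    (v : ι → R) : v ⬝ᵥ (Pᵀ * A * P) *ᵥ v = (P *ᵥ v) ⬝ᵥ A *ᵥ (P *ᵥ v) := by
  rw [← mulVec_mulVec, ← mulVec_mulVec, dotProduct_mulVec, vecMul_transpose]

theorem transpose_mul_mul_apply {R : Type*} [CommSemiring R] (A P : Matrix ι ι R) (i j : ι) :
    (Pᵀ * A * P) i j = Pᵀ i ⬝ᵥ A *ᵥ Pᵀ j := by
  simp only [mul_apply, transpose_apply, dotProduct, mulVec, Finset.sum_mul, Finset.mul_sum]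
  rw [Finset.sum_comm]
  exact Finset.sum_congr rfl fun _ _ => Finset.sum_congr rfl fun _ _ => by ring

theorem PosDef.pos_of_mem_valuesAtNonzero {A : Matrix ι ι ℤ} (hA : A.PosDef) {z : ℤ}
    (hz : z ∈ A.valuesAtNonzero) : 0 < z := by
  obtain ⟨v, hv, rfl⟩ := hz
  simpa using hA.dotProduct_mulVec_pos hv

theorem PosDef.transpose_mul_mul [DecidableEq ι] {A : Matrix ι ι ℤ} (hA : A.PosDef)
    {P : Matrix ι ι ℤ} (hP : IsUnit P) : (Pᵀ * A * P).PosDef := by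
  simpa [conjTranspose_eq_transpose_of_trivial] using
    hA.conjTranspose_mul_mul_same (mulVec_injective_of_isUnit hP)

theorem det_transpose_mul_mul [DecidableEq ι] {A P : Matrix ι ι ℤ} (hP : IsUnit P) :
    (Pᵀ * A * P).det = A.det := by
  have h := Int.isUnit_sq ((isUnit_iff_isUnit_det P).1 hP)
  rw [det_mul, det_mul, det_transpose]
  linear_combination A.det * h

theorem valuesAtNonzero_transpose_mul_mul [DecidableEq ι] (A : Matrix ι ι ℤ) {P : Matrix ι ι ℤ}
    (hP : IsUnit P) :
    (Pᵀ * A * P).valuesAtNonzero = A.valuesAtNonzero := by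
  ext z
  constructor
  · rintro ⟨v, hv, rfl⟩
    refine ⟨P *ᵥ v, fun h => hv ?_, (dotProduct_transpose_mul_mul_mulVec A P v).symm⟩
    exact mulVec_injective_of_isUnit hP (h.trans (mulVec_zero P).symm)
  · rintro ⟨v, hv, rfl⟩
    obtain ⟨w, rfl⟩ := mulVec_surjective_iff_isUnit.2 hP v
    refine ⟨w, fun h => hv (by simp [h]), dotProduct_transpose_mul_mul_mulVec A P w⟩

theorem PosDef.exists_isLeast_valuesAtNonzero [Nonempty ι] {A : Matrix ι ι ℤ} (hA : A.PosDef) :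
    ∃ μ, IsLeast A.valuesAtNonzero μ := by
  obtain ⟨μ, hμ, hle⟩ := Int.exists_least_of_bdd (P := (· ∈ A.valuesAtNonzero))
    ⟨0, fun _ hz => (hA.pos_of_mem_valuesAtNonzero hz).le⟩
    ⟨_, 1, one_ne_zero, rfl⟩
  exact ⟨μ, hμ, hle⟩

theorem PosDef.isPrimitiveVector_of_isLeast {A : Matrix ι ι ℤ} (hA : A.PosDef) {v : ι → ℤ}
    (hv : v ≠ 0) (hmin : IsLeast A.valuesAtNonzero (v ⬝ᵥ A *ᵥ v)) : IsPrimitiveVector v := by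
  intro g hg
  choose w hw using hg
  have hvw : v = g • w := funext hw
  have hw0 : w ≠ 0 := by rintro rfl; exact hv (by simpa using hvw)
  have hval : v ⬝ᵥ A *ᵥ v = g ^ 2 * (w ⬝ᵥ A *ᵥ w) := by
    rw [hvw, mulVec_smul, dotProduct_smul, smul_dotProduct, smul_eq_mul, smul_eq_mul]; ring
  have hle : v ⬝ᵥ A *ᵥ v ≤ w ⬝ᵥ A *ᵥ w := hmin.2 ⟨w, hw0, rfl⟩
  have hpos := hA.pos_of_mem_valuesAtNonzero ⟨w, hw0, rfl⟩
  have hg0 : g ≠ 0 := by rintro rfl; exact hv (by simpa using hvw)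
  have hg2 : g ^ 2 ≤ 1 := le_of_mul_le_mul_right (by linarith) hpos
  have : -1 ≤ g ∧ g ≤ 1 := by constructor <;> nlinarith
  rw [Int.isUnit_iff]
  omega

theorem apply_self_mem_valuesAtNonzero [DecidableEq ι] (A : Matrix ι ι ℤ) (j : ι) :
    A j j ∈ A.valuesAtNonzero :=
  ⟨Pi.single j 1, by simp, by simp⟩

def shear [DecidableEq ι] (i₀ : ι) (c : ι → ℤ) : Matrix ι ι ℤ := 1 + vecMulVec (Pi.single i₀ 1) c

theorem transpose_mul_mul_shear_apply [DecidableEq ι] (B : Matrix ι ι ℤ) {i₀ : ι}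
    {c : ι → ℤ} (hc : c i₀ = 0) (k : ι) :
    ((shear i₀ c)ᵀ * B * shear i₀ c) i₀ k = B i₀ k + c k * B i₀ i₀ := by
  simp only [shear, transpose_add, transpose_one, transpose_vecMulVec, add_mul, one_mul, mul_apply,
    add_apply, vecMulVec_apply, hc, Pi.single_apply, mul_ite, mul_one, mul_zero, ite_self, zero_mul,
    Finset.sum_const_zero, add_zero, one_apply, ite_mul, mul_add, Finset.sum_add_distrib,
    Finset.sum_ite_eq', Finset.mem_univ, ↓reduceIte, add_right_inj]
  ring

theorem isUnit_shear [DecidableEq ι] {i₀ : ι} {c : ι → ℤ} (hc : c i₀ = 0) :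
    IsUnit (shear i₀ c) := by
  rw [shear, isUnit_iff_isUnit_det, vecMulVec_eq Unit, det_one_add_replicateCol_mul_replicateRow]
  simp [hc]

theorem PosDef.exists_isLeast_transpose_mul_mul_apply [DecidableEq ι] {A : Matrix ι ι ℤ}
    (hA : A.PosDef) (i₀ : ι)
    (hext : ∀ v : ι → ℤ, IsPrimitiveVector v → ∃ P : Matrix ι ι ℤ, IsUnit P ∧ Pᵀ i₀ = v) :
    ∃ P : Matrix ι ι ℤ, IsUnit P ∧ IsLeast A.valuesAtNonzero ((Pᵀ * A * P) i₀ i₀) := by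
  have : Nonempty ι := ⟨i₀⟩
  obtain ⟨μ, ⟨v, hv, rfl⟩, hμ⟩ := hA.exists_isLeast_valuesAtNonzero
  obtain ⟨P, hP, hPv⟩ := hext v (hA.isPrimitiveVector_of_isLeast hv ⟨⟨v, hv, rfl⟩, hμ⟩)
  refine ⟨P, hP, ?_⟩
  rw [transpose_mul_mul_apply, hPv]
  exact ⟨⟨v, hv, rfl⟩, hμ⟩

theorem PosDef.exists_reduced [DecidableEq ι] {A : Matrix ι ι ℤ} (hA : A.PosDef) (i₀ : ι)
    (hext : ∀ v : ι → ℤ, IsPrimitiveVector v → ∃ P : Matrix ι ι ℤ, IsUnit P ∧ Pᵀ i₀ = v) :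
    ∃ P : Matrix ι ι ℤ, IsUnit P ∧ IsLeast A.valuesAtNonzero ((Pᵀ * A * P) i₀ i₀) ∧
      ∀ j ≠ i₀, |2 * (Pᵀ * A * P) i₀ j| ≤ (Pᵀ * A * P) i₀ i₀ := by
  obtain ⟨P, hP, hmin⟩ := hA.exists_isLeast_transpose_mul_mul_apply i₀ hext
  set B := Pᵀ * A * P
  have hpos : 0 < B i₀ i₀ := hA.pos_of_mem_valuesAtNonzero hmin.1
  choose s hs using fun j => Int.exists_abs_two_mul_add_mul_le (B i₀ j) hpos
  obtain ⟨c, hc, hcs⟩ : ∃ c : ι → ℤ, c i₀ = 0 ∧ ∀ j ≠ i₀, c j = s j :=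
    ⟨Function.update s i₀ 0, Function.update_self .., fun j hj => Function.update_of_ne hj ..⟩
  have hconj : (P * shear i₀ c)ᵀ * A * (P * shear i₀ c) = (shear i₀ c)ᵀ * B * shear i₀ c := by
    simp only [B, transpose_mul, Matrix.mul_assoc]
  have hdiag : ((shear i₀ c)ᵀ * B * shear i₀ c) i₀ i₀ = B i₀ i₀ := by
    rw [transpose_mul_mul_shear_apply B hc, hc, zero_mul, add_zero]
  refine ⟨P * shear i₀ c, hP.mul (isUnit_shear hc), ?_, fun j hj => ?_⟩
  · rwa [hconj, hdiag]
  · rw [hconj, hdiag, transpose_mul_mul_shear_apply B hc, hcs j hj, mul_comm (s j)]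
    exact hs j

end Matrix

namespace IsPrimitiveVector

theorem exists_isUnit_fin_two {v : Fin 2 → ℤ} (hv : IsPrimitiveVector v) :
    ∃ P : Matrix (Fin 2) (Fin 2) ℤ, IsUnit P ∧ Pᵀ 0 = v := by
  obtain ⟨a, b, hab⟩ :=
    isRelPrime_iff_isCoprime.1 fun d h0 h1 => hv d (Fin.forall_fin_two.2 ⟨h0, h1⟩)
  refine ⟨!![v 0, -b; v 1, a], ?_, ?_⟩
  · rw [Matrix.isUnit_iff_isUnit_det, Matrix.det_fin_two_of]
    exact Int.isUnit_iff.2 (Or.inl (by linear_combination hab))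
  · ext i; fin_cases i <;> rfl

theorem exists_isUnit_fin_three {v : Fin 3 → ℤ} (hv : IsPrimitiveVector v) :
    ∃ P : Matrix (Fin 3) (Fin 3) ℤ, IsUnit P ∧ Pᵀ 0 = v := by
  obtain ⟨g, x, y, hxy, h0, h1⟩ := Int.exists_mul_isCoprime (v 0) (v 1)
  obtain ⟨a, b, hab⟩ := hxy
  have hg : IsCoprime g (v 2) := isRelPrime_iff_isCoprime.1 fun d hd h2 => hv d fun i => by
    fin_cases i
    exacts [h0 ▸ hd.mul_right x, h1 ▸ hd.mul_right y, h2]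
  obtain ⟨c, e, hce⟩ := hg
  refine ⟨!![v 0, -b, -e * x; v 1, a, -e * y; v 2, 0, c], ?_, ?_⟩
  · rw [Matrix.isUnit_iff_isUnit_det, Matrix.det_fin_three]
    simp only [Matrix.of_apply, Matrix.cons_val', Matrix.cons_val_zero, Matrix.cons_val_one,
      Matrix.cons_val_two, Matrix.empty_val', Matrix.cons_val_fin_one, Matrix.head_cons,
      Matrix.tail_cons, Matrix.head_fin_const]
    refine Int.isUnit_iff.2 (Or.inl ?_)
    rw [h0, h1]
    linear_combination (g * c + e * v 2) * hab + hce
  · ext i; fin_cases i <;> rfl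

end IsPrimitiveVector

namespace Matrix.PosDef

theorem exists_reduced_fin_two {B : Matrix (Fin 2) (Fin 2) ℤ} (hB : B.PosDef) :
    ∃ P : Matrix (Fin 2) (Fin 2) ℤ, IsUnit P ∧ IsLeast B.valuesAtNonzero ((Pᵀ * B * P) 0 0) ∧
      |2 * (Pᵀ * B * P) 0 1| ≤ (Pᵀ * B * P) 0 0 ∧ (Pᵀ * B * P) 0 0 ≤ (Pᵀ * B * P) 1 1 := by
  obtain ⟨P, hP, hmin, hred⟩ :=
    hB.exists_reduced 0 fun _ hv => hv.exists_isUnit_fin_two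
  refine ⟨P, hP, hmin, hred 1 (by decide), hmin.2 ?_⟩
  rw [← valuesAtNonzero_transpose_mul_mul B hP]
  exact apply_self_mem_valuesAtNonzero _ 1

theorem three_mul_sq_le_four_mul_det_fin_two {B : Matrix (Fin 2) (Fin 2) ℤ} (hB : B.PosDef)
    {μ : ℤ} (hμ : IsLeast B.valuesAtNonzero μ) : 3 * μ ^ 2 ≤ 4 * B.det := by
  obtain ⟨P, hP, hmin, hb, hc⟩ := hB.exists_reduced_fin_two
  obtain rfl := hμ.unique hmin
  have hsymm := (hB.transpose_mul_mul hP).isSymm.apply 0 1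
  have hpos := hB.pos_of_mem_valuesAtNonzero hmin.1
  rw [← det_transpose_mul_mul hP, det_fin_two, hsymm]
  obtain ⟨h1, h2⟩ := abs_le.1 hb
  nlinarith

theorem exists_transpose_mul_mul_eq_one_fin_two {B : Matrix (Fin 2) (Fin 2) ℤ} (hB : B.PosDef)
    (hdet : B.det = 1) : ∃ P : Matrix (Fin 2) (Fin 2) ℤ, IsUnit P ∧ Pᵀ * B * P = 1 := by
  obtain ⟨P, hP, hmin, hb, hc⟩ := hB.exists_reduced_fin_two
  have hμ : (Pᵀ * B * P) 0 0 = 1 := by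
    have := hB.three_mul_sq_le_four_mul_det_fin_two hmin
    have := hB.pos_of_mem_valuesAtNonzero hmin.1
    nlinarith
  have hb0 : (Pᵀ * B * P) 0 1 = 0 := by
    rw [hμ] at hb
    obtain ⟨h1, h2⟩ := abs_le.1 hb
    omega
  have hdetC := det_transpose_mul_mul (A := B) hP
  have hsymm := (hB.transpose_mul_mul hP).isSymm.apply 0 1
  rw [det_fin_two, hdet, hμ, hb0, hsymm, hb0, one_mul, mul_zero, sub_zero] at hdetC
  refine ⟨P, hP, ?_⟩
  ext i j
  fin_cases i <;> fin_cases j <;> simp [hμ, hb0, hsymm, hdetC]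

end Matrix.PosDef

namespace Matrix

def scaledSchurComplement {n : ℕ} (C : Matrix (Fin (n + 1)) (Fin (n + 1)) ℤ) :
    Matrix (Fin n) (Fin n) ℤ :=
  of fun i j => C 0 0 * C i.succ j.succ - C 0 i.succ * C 0 j.succ

variable {C : Matrix (Fin 3) (Fin 3) ℤ}

theorem IsSymm.apply_zero_zero_mul_dotProduct_mulVec (hC : C.IsSymm) (v : Fin 3 → ℤ) :
    C 0 0 * (v ⬝ᵥ C *ᵥ v) =
      (C 0 ⬝ᵥ v) ^ 2 + Fin.tail v ⬝ᵥ C.scaledSchurComplement *ᵥ Fin.tail v := by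
  have h10 := hC.apply 0 1
  have h20 := hC.apply 0 2
  have h21 := hC.apply 1 2
  simp only [dotProduct, mulVec, Fin.sum_univ_three, Fin.sum_univ_two, scaledSchurComplement,
    Fin.tail, of_apply]
  simp only [Fin.succ_zero_eq_one, Fin.succ_one_eq_two, h10, h20, h21]
  ring

theorem IsSymm.det_scaledSchurComplement (hC : C.IsSymm) :
    C.scaledSchurComplement.det = C 0 0 * C.det := by
  have h10 := hC.apply 0 1
  have h20 := hC.apply 0 2
  have h21 := hC.apply 1 2
  simp only [det_fin_two, det_fin_three, scaledSchurComplement, of_apply, Fin.succ_zero_eq_one,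
    Fin.succ_one_eq_two]
  rw [h10, h20, h21]
  ring

theorem IsSymm.scaledSchurComplement (hC : C.IsSymm) : C.scaledSchurComplement.IsSymm := by
  ext i j
  simp only [transpose_apply, Matrix.scaledSchurComplement, of_apply, hC.apply i.succ j.succ]
  ring

end Matrix

namespace Matrix.PosDef

variable {C : Matrix (Fin 3) (Fin 3) ℤ}

theorem three_mul_sq_le_four_mul_scaledSchurComplement (hC : C.PosDef)
    (hmin : IsLeast C.valuesAtNonzero (C 0 0)) {w : Fin 2 → ℤ} (hw : w ≠ 0) :
    3 * C 0 0 ^ 2 ≤ 4 * (w ⬝ᵥ C.scaledSchurComplement *ᵥ w) := by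
  have hpos := hC.pos_of_mem_valuesAtNonzero hmin.1
  obtain ⟨s, hs⟩ := Int.exists_abs_two_mul_add_mul_le (C 0 1 * w 0 + C 0 2 * w 1) hpos
  have hv : (Fin.cons s w : Fin 3 → ℤ) ≠ 0 := fun h => hw <| by
    have := congrArg Fin.tail h
    rwa [Fin.tail_cons] at this
  have hle := hmin.2 ⟨_, hv, rfl⟩
  have hid := hC.isSymm.apply_zero_zero_mul_dotProduct_mulVec (Fin.cons s w)
  have hrow : C 0 ⬝ᵥ Fin.cons s w = C 0 1 * w 0 + C 0 2 * w 1 + C 0 0 * s := by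
    simp only [dotProduct, Fin.sum_univ_succ, Fin.cons_zero, Fin.cons_succ, Fin.succ_zero_eq_one,
      Finset.univ_unique, Fin.default_eq_zero, Finset.sum_singleton, Fin.succ_one_eq_two]
    ring
  rw [hrow, Fin.tail_cons] at hid
  obtain ⟨h1, h2⟩ := abs_le.1 hs
  nlinarith

theorem scaledSchurComplement (hC : C.PosDef) (hmin : IsLeast C.valuesAtNonzero (C 0 0)) :
    C.scaledSchurComplement.PosDef := by
  refine of_dotProduct_mulVec_pos
    (isHermitian_iff_isSymm.2 hC.isSymm.scaledSchurComplement)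
    fun w hw => ?_
  have := hC.three_mul_sq_le_four_mul_scaledSchurComplement hmin hw
  have := hC.pos_of_mem_valuesAtNonzero hmin.1
  simp only [star_trivial]
  nlinarith

theorem eq_one_of_isLeast_fin_three {A : Matrix (Fin 3) (Fin 3) ℤ} (hA : A.PosDef)
    (hdet : A.det = 1) {μ : ℤ} (hμ : IsLeast A.valuesAtNonzero μ) : μ = 1 := by
  obtain ⟨P, hP, hmin⟩ :=
    hA.exists_isLeast_transpose_mul_mul_apply 0 fun _ hv => hv.exists_isUnit_fin_three
  obtain rfl := hμ.unique hmin
  set C := Pᵀ * A * P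
  have hC : C.PosDef := hA.transpose_mul_mul hP
  rw [← valuesAtNonzero_transpose_mul_mul A hP] at hmin
  have hK := hC.scaledSchurComplement hmin
  obtain ⟨μ₂, hμ₂⟩ := hK.exists_isLeast_valuesAtNonzero
  have hHermite := hK.three_mul_sq_le_four_mul_det_fin_two hμ₂
  rw [hC.isSymm.det_scaledSchurComplement, det_transpose_mul_mul hP,
    hdet, mul_one] at hHermite
  obtain ⟨w, hw, hw₂⟩ := hμ₂.1
  have hlow := hC.three_mul_sq_le_four_mul_scaledSchurComplement hmin hw
  rw [show w ⬝ᵥ C.scaledSchurComplement *ᵥ w = μ₂ from hw₂] at hlow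
  have hpos := hC.pos_of_mem_valuesAtNonzero hmin.1
  have hsq : 9 * C 0 0 ^ 4 ≤ 16 * μ₂ ^ 2 := by
    nlinarith [pow_le_pow_left₀ (by positivity) hlow 2]
  have hcube : 27 * C 0 0 ^ 3 ≤ 64 := by nlinarith
  nlinarith

theorem exists_transpose_mul_mul_eq_one_of_row_zero (hC : C.PosDef) (hdet : C.det = 1)
    (h00 : C 0 0 = 1) (h01 : C 0 1 = 0) (h02 : C 0 2 = 0) :
    ∃ R : Matrix (Fin 3) (Fin 3) ℤ, IsUnit R ∧ Rᵀ * C * R = 1 := by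
  have hsymm := hC.isSymm
  have h10 : C 1 0 = 0 := (hsymm.apply 0 1).trans h01
  have h20 : C 2 0 = 0 := (hsymm.apply 0 2).trans h02
  have hB : (C.submatrix Fin.succ Fin.succ).PosDef := hC.submatrix (Fin.succ_injective 2)
  have hBdet : (C.submatrix Fin.succ Fin.succ).det = 1 := by
    rw [← hdet, det_fin_three, det_fin_two]
    simp [h00, h01, h02, h10, h20]
  obtain ⟨Q, hQ, hQB⟩ := hB.exists_transpose_mul_mul_eq_one_fin_two hBdet
  have hR : IsUnit !![1, 0, 0; 0, Q 0 0, Q 0 1; 0, Q 1 0, Q 1 1] := by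
    rw [isUnit_iff_isUnit_det] at hQ ⊢
    convert hQ using 1
    simp [det_fin_three, det_fin_two]
  refine ⟨_, hR, ?_⟩
  have hQij := fun i j => congrFun (congrFun hQB i) j
  simp only [mul_apply, Fin.sum_univ_two, Fin.forall_fin_two, transpose_apply, submatrix_apply,
    Fin.succ_zero_eq_one, Fin.succ_one_eq_two, one_apply_eq] at hQij
  ext i j
  fin_cases i <;> fin_cases j <;>
    simp [mul_apply, Fin.sum_univ_three, h00, h01, h02, h10, h20, hQij]

theorem exists_transpose_mul_mul_eq_one_fin_three {A : Matrix (Fin 3) (Fin 3) ℤ} (hA : A.PosDef)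
    (hdet : A.det = 1) : ∃ P : Matrix (Fin 3) (Fin 3) ℤ, IsUnit P ∧ Pᵀ * A * P = 1 := by
  obtain ⟨P, hP, hmin, hred⟩ := hA.exists_reduced 0 fun _ hv => hv.exists_isUnit_fin_three
  have h00 := hA.eq_one_of_isLeast_fin_three hdet hmin
  have h0j : ∀ j ≠ 0, (Pᵀ * A * P) 0 j = 0 := fun j hj => by
    have := abs_le.1 (hred j hj)
    omega
  obtain ⟨R, hR, hRC⟩ := (hA.transpose_mul_mul hP).exists_transpose_mul_mul_eq_one_of_row_zero
    ((det_transpose_mul_mul hP).trans hdet) h00 (h0j 1 (by decide)) (h0j 2 (by decide))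
  refine ⟨P * R, hP.mul hR, ?_⟩
  rw [← hRC]
  simp only [transpose_mul, Matrix.mul_assoc]

end Matrix.PosDef

theorem Matrix.posDef_fin_three_of_minors {a u k m : ℤ} (ha : 0 < a) (hD : 0 < a * k - u ^ 2)
    (hdet : 0 < m * (a * k - u ^ 2) - a) :
    (!![a, u, 0; u, k, 1; 0, 1, m] : Matrix (Fin 3) (Fin 3) ℤ).PosDef := by
  refine PosDef.of_dotProduct_mulVec_pos (isHermitian_iff_isSymm.2 ?_) fun v hv => ?_
  · ext i j; fin_cases i <;> fin_cases j <;> rfl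
  have hv' : ¬(v 0 = 0 ∧ v 1 = 0 ∧ v 2 = 0) := fun h => hv <| by
    ext i; fin_cases i <;> simp [h]
  set D := a * k - u ^ 2
  set δ := m * D - a
  have key : a * D * (star v ⬝ᵥ !![a, u, 0; u, k, 1; 0, 1, m] *ᵥ v) =
      D * (a * v 0 + u * v 1) ^ 2 + (D * v 1 + a * v 2) ^ 2 + a * δ * v 2 ^ 2 := by
    simp only [dotProduct, Pi.star_apply, star_trivial, mulVec, of_apply, cons_val',
      cons_val_fin_one, Fin.sum_univ_three, cons_val_zero, cons_val_one, cons_val, zero_mul,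
      add_zero, one_mul, zero_add, D, δ]
    ring
  have hsum : 0 < D * (a * v 0 + u * v 1) ^ 2 + (D * v 1 + a * v 2) ^ 2 + a * δ * v 2 ^ 2 := by
    rcases eq_or_ne (v 2) 0 with h2 | h2
    · rcases eq_or_ne (v 1) 0 with h1 | h1
      · have h0 : v 0 ≠ 0 := fun h0 => hv' ⟨h0, h1, h2⟩
        simp only [h1, h2, mul_zero, add_zero, zero_pow two_ne_zero]
        positivity
      · simp only [h2, mul_zero, add_zero, zero_pow two_ne_zero]
        positivity
    · positivity
  exact pos_of_mul_pos_right (key ▸ hsum) (by positivity)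

theorem exists_sq_add_sq_add_sq_of_dvd {m a D u : ℤ} (ha : 0 < a) (hD : 0 < D)
    (hdvd : a ∣ u ^ 2 + D) (hmD : m * D = a + 1) : ∃ x y z : ℤ, x ^ 2 + y ^ 2 + z ^ 2 = m := by
  obtain ⟨k, hk⟩ := hdvd
  have hD' : a * k - u ^ 2 = D := by linear_combination -hk
  set A : Matrix (Fin 3) (Fin 3) ℤ := !![a, u, 0; u, k, 1; 0, 1, m]
  have hA : A.PosDef := posDef_fin_three_of_minors ha (hD' ▸ hD) (by rw [hD', hmD]; omega)
  have hdet : A.det = 1 := by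
    simp only [A, det_fin_three, of_apply, cons_val', cons_val_zero, cons_val_fin_one,
      cons_val_one, cons_val, mul_one, mul_zero, add_zero, zero_mul, sub_zero]
    linear_combination hmD - m * hk
  obtain ⟨P, hP, hPA⟩ := hA.exists_transpose_mul_mul_eq_one_fin_three hdet
  have hm : m ∈ (Pᵀ * A * P).valuesAtNonzero := by
    rw [valuesAtNonzero_transpose_mul_mul A hP]
    exact A.apply_self_mem_valuesAtNonzero 2
  rw [hPA] at hm
  obtain ⟨w, -, hw⟩ := hm
  exact ⟨w 0, w 1, w 2, by simpa [dotProduct, Fin.sum_univ_three, sq] using hw⟩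

open scoped NumberTheorySymbols

theorem exists_sq_add_dvd_of_jacobiSym_eq_one {p : ℕ} [Fact p.Prime] (hp : p % 4 = 1) {m D : ℤ}
    (hmD : m * D ≡ 1 [ZMOD p]) (hJ : J(m | p) = 1) : ∃ u : ℤ, (p : ℤ) ∣ u ^ 2 + D := by
  have hD : J(D | p) = 1 := calc
    J(D | p) = J(m * D | p) := by rw [mul_comm, jacobiSym.mul_left, hJ, mul_one]
    _ = 1 := by rw [jacobiSym.mod_left' hmD, jacobiSym.one_left]
  have hnegD : J(-D | p) = 1 := by
    rw [neg_eq_neg_one_mul, jacobiSym.mul_left, hD, mul_one,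
      jacobiSym.at_neg_one (Nat.odd_iff.2 (by omega)), ZMod.χ₄_nat_one_mod_four hp]
  obtain ⟨r, hr⟩ := ZMod.isSquare_of_jacobiSym_eq_one hnegD
  refine ⟨r.valMinAbs, (ZMod.intCast_zmod_eq_zero_iff_dvd _ p).1 ?_⟩
  push_cast at hr ⊢
  linear_combination -hr

theorem exists_prime_eq_add_mul {q : ℕ} (hq : 0 < q) {r : ℤ} (hr : IsCoprime r q) :
    ∃ p : ℕ, p.Prime ∧ ∃ t : ℤ, 0 ≤ t ∧ (p : ℤ) = r + q * t := by
  obtain ⟨p, hpr, hp, hmod⟩ := Nat.forall_exists_prime_gt_and_zmodEq r.natAbs hq.ne' hr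
  obtain ⟨t, ht⟩ := hmod.symm.dvd
  refine ⟨p, hp, t, ?_, by linarith⟩
  have : r < p := by omega
  nlinarith

/- The residue class of `p` modulo `4m` in each case below makes `p ≡ 1 (mod 4)`, `m ∣ c p + 1`
(`c = 2` when `m ≡ 3 (mod 8)`, else `c = 1`) and `J(m | p) = 1`; the form then has `a = c p` and
`D = (c p + 1) / m`. -/
theorem exists_sq_add_sq_add_sq_of_mod_four_eq_one {m : ℕ} (hm : m % 4 = 1) :
    ∃ x y z : ℤ, x ^ 2 + y ^ 2 + z ^ 2 = m := by
  obtain ⟨p, hp, t, ht, hpt⟩ := exists_prime_eq_add_mul (q := 4 * m) (by omega)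
    (r := 2 * m - 1) ⟨-(2 * m + 1), m, by push_cast; ring⟩
  have := Fact.mk hp
  push_cast at hpt
  have hp4 : p % 4 = 1 := by
    have : (p : ℤ) = 2 * m - 1 + 4 * (m * t) := by rw [hpt]; ring
    omega
  have hJ : J(m | p) = 1 := by
    rw [jacobiSym.quadratic_reciprocity_one_mod_four hm (Nat.odd_iff.2 (by omega)),
      jacobiSym.mod_left' (Int.modEq_iff_dvd.2 ⟨-(2 + 4 * t), by linear_combination -hpt⟩ :
        (p : ℤ) ≡ -1 [ZMOD m]),
      jacobiSym.at_neg_one (Nat.odd_iff.2 (by omega)), ZMod.χ₄_nat_one_mod_four hm]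
  obtain ⟨u, hu⟩ := exists_sq_add_dvd_of_jacobiSym_eq_one hp4 (D := 4 * t + 2)
    (Int.modEq_iff_dvd.2 ⟨-1, by linear_combination hpt⟩) hJ
  exact exists_sq_add_sq_add_sq_of_dvd (by exact_mod_cast hp.pos) (by omega) hu
    (by linear_combination -hpt)

theorem exists_sq_add_sq_add_sq_of_mod_four_eq_two {m : ℕ} (hm : m % 4 = 2) :
    ∃ x y z : ℤ, x ^ 2 + y ^ 2 + z ^ 2 = m := by
  obtain ⟨j, rfl⟩ : ∃ j, m = 4 * j + 2 := ⟨m / 4, by omega⟩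
  obtain ⟨p, hp, t, ht, hpt⟩ := exists_prime_eq_add_mul (q := 4 * (4 * j + 2)) (by omega)
    (r := 4 * j + 1) <| by
      push_cast
      exact IsCoprime.mul_right ⟨1, -j, by ring⟩ ⟨-1, 1, by ring⟩
  have := Fact.mk hp
  push_cast at hpt
  have hp8 : p % 2 = 1 ∧ (p % 8 = 1 ∧ (2 * j + 1) % 4 = 1 ∨ p % 8 = 5 ∧ (2 * j + 1) % 4 = 3) := by
    have : (p : ℤ) = 4 * j + 1 + 8 * ((2 * j + 1) * t) := by rw [hpt]; ring
    omega
  have hJ : J((4 * j + 2 : ℕ) | p) = 1 := by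
    rw [show ((4 * j + 2 : ℕ) : ℤ) = 2 * (2 * j + 1 : ℕ) by push_cast; ring, jacobiSym.mul_left,
      jacobiSym.at_two (Nat.odd_iff.2 hp8.1),
      jacobiSym.quadratic_reciprocity_one_mod_four' (Nat.odd_iff.2 (by omega)) (by omega),
      jacobiSym.mod_left'
        (Int.modEq_iff_dvd.2 ⟨-(2 + 8 * t), by push_cast; linear_combination -hpt⟩ :
        (p : ℤ) ≡ -1 [ZMOD (2 * j + 1 : ℕ)]),
      jacobiSym.at_neg_one (Nat.odd_iff.2 (by omega)), ZMod.χ₈_nat_eq_if_mod_eight,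
      ZMod.χ₄_nat_eq_if_mod_four]
    rcases hp8 with ⟨h2, ⟨h8, h4⟩ | ⟨h8, h4⟩⟩ <;> simp [h2, h8, h4]
  obtain ⟨u, hu⟩ := exists_sq_add_dvd_of_jacobiSym_eq_one (by omega) (D := 4 * t + 1)
    (Int.modEq_iff_dvd.2 ⟨-1, by push_cast; linear_combination hpt⟩) hJ
  exact exists_sq_add_sq_add_sq_of_dvd (by exact_mod_cast hp.pos) (by omega) hu
    (by push_cast; linear_combination -hpt)

theorem exists_sq_add_sq_add_sq_of_mod_eight_eq_three {m : ℕ} (hm : m % 8 = 3) :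
    ∃ x y z : ℤ, x ^ 2 + y ^ 2 + z ^ 2 = m := by
  obtain ⟨j, rfl⟩ : ∃ j, m = 8 * j + 3 := ⟨m / 8, by omega⟩
  obtain ⟨p, hp, t, ht, hpt⟩ := exists_prime_eq_add_mul (q := 4 * (8 * j + 3)) (by omega)
    (r := 4 * j + 1) <| by
      push_cast
      exact IsCoprime.mul_right ⟨1, -j, by ring⟩ ⟨-2, 1, by ring⟩
  have := Fact.mk hp
  push_cast at hpt
  have hp4 : p % 4 = 1 := by
    have : (p : ℤ) = 4 * j + 1 + 4 * ((8 * j + 3) * t) := by rw [hpt]; ring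
    omega
  have hodd : Odd (8 * j + 3) := Nat.odd_iff.2 (by omega)
  have hJ : J((8 * j + 3 : ℕ) | p) = 1 := calc
    _ = J(p | 8 * j + 3) := jacobiSym.quadratic_reciprocity_one_mod_four' hodd hp4
    _ = J(4 * p | 8 * j + 3) := by rw [jacobiSym.mul_left, jacobiSym.at_four hodd, one_mul]
    _ = J(-2 | 8 * j + 3) := jacobiSym.mod_left' <| Int.modEq_iff_dvd.2
      ⟨-(2 + 16 * t), by push_cast; linear_combination -4 * hpt⟩
    _ = 1 := by
      rw [jacobiSym.at_neg_two hodd, ZMod.χ₈'_nat_eq_if_mod_eight]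
      simp [Nat.add_mod, Nat.mul_mod]
  obtain ⟨u₀, hu₀⟩ := exists_sq_add_dvd_of_jacobiSym_eq_one hp4 (D := 8 * t + 1)
    (Int.modEq_iff_dvd.2 ⟨-2, by push_cast; linear_combination 2 * hpt⟩) hJ
  obtain ⟨k, hk⟩ : Odd (p : ℤ) := ⟨2 * j + 2 * (8 * j + 3) * t, by linear_combination hpt⟩
  obtain ⟨u, hu_odd, hu⟩ : ∃ u : ℤ, Odd u ∧ (p : ℤ) ∣ u ^ 2 + (8 * t + 1) := by
    rcases Int.even_or_odd u₀ with h | h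
    · refine ⟨u₀ + p, h.add_odd ⟨k, hk⟩, ?_⟩
      obtain ⟨c, hc⟩ := hu₀
      exact ⟨c + 2 * u₀ + p, by linear_combination hc⟩
    · exact ⟨u₀, h, hu₀⟩
  have h2 : (2 : ℤ) ∣ u ^ 2 + (8 * t + 1) := (hu_odd.pow.add_odd ⟨4 * t, by ring⟩).two_dvd
  exact exists_sq_add_sq_add_sq_of_dvd (a := 2 * p) (by have := hp.pos; omega) (by omega)
    ((IsCoprime.mul_dvd ⟨-k, 1, by linear_combination hk⟩ h2 hu))
    (by push_cast; linear_combination -2 * hpt)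

theorem Int.exists_sq_add_sq_add_sq {m : ℤ} (hm : 0 ≤ m)
    (h : m % 4 = 1 ∨ m % 4 = 2 ∨ m % 8 = 3) : ∃ x y z : ℤ, x ^ 2 + y ^ 2 + z ^ 2 = m := by
  lift m to ℕ using hm
  rcases h with h | h | h
  exacts [exists_sq_add_sq_add_sq_of_mod_four_eq_one (by omega),
    exists_sq_add_sq_add_sq_of_mod_four_eq_two (by omega),
    exists_sq_add_sq_add_sq_of_mod_eight_eq_three (by omega)]

theorem exists_four_sq_with_sum_of_four_mul {n T u v w : ℤ}
    (h : T ^ 2 + u ^ 2 + v ^ 2 + w ^ 2 = 4 * n) (h4 : 4 ∣ T + u + v + w) (huv : u % 2 = v % 2)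
    (hvw : v % 2 = w % 2) :
    ∃ a b c d : ℤ, a ^ 2 + b ^ 2 + c ^ 2 + d ^ 2 = n ∧ a + b + c + d = T := by
  obtain ⟨a, ha⟩ := h4
  obtain ⟨q, hq⟩ : ∃ q, u + v = 2 * q := ⟨(u + v) / 2, by omega⟩
  obtain ⟨r, hr⟩ : ∃ r, u + w = 2 * r := ⟨(u + w) / 2, by omega⟩
  obtain ⟨s, hs⟩ : ∃ s, v + w = 2 * s := ⟨(v + w) / 2, by omega⟩
  refine ⟨a, a - s, a - r, a - q, ?_, by omega⟩
  have hu : u = q + r - s := by omega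
  have hv : v = q + s - r := by omega
  have hw : w = r + s - q := by omega
  have hT : T = 4 * a - q - r - s := by omega
  subst hu hv hw hT
  exact mul_left_cancel₀ (by norm_num : (4 : ℤ) ≠ 0) (by linear_combination h)

theorem exists_four_sq_with_sum_of_odd {n T : ℤ} (hn : n % 2 = 1) (hT : T ≡ n [ZMOD 2])
    (hle : T ^ 2 ≤ 4 * n) :
    ∃ a b c d : ℤ, a ^ 2 + b ^ 2 + c ^ 2 + d ^ 2 = n ∧ a + b + c + d = T := by
  unfold Int.ModEq at hT
  have hT2 := Int.sq_emod_cases T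
  obtain ⟨u, v, w, huvw⟩ := Int.exists_sq_add_sq_add_sq (m := 4 * n - T ^ 2) (by omega) (by omega)
  have hu := Int.sq_emod_cases u
  have hv := Int.sq_emod_cases v
  have hw := Int.sq_emod_cases w
  have hsum : T ^ 2 + u ^ 2 + v ^ 2 + w ^ 2 = 4 * n := by linear_combination huvw
  rcases (by omega : 4 ∣ T + u + v + w ∨ 4 ∣ T + -u + v + w) with h4 | h4
  · exact exists_four_sq_with_sum_of_four_mul hsum h4 (by omega) (by omega)
  · exact exists_four_sq_with_sum_of_four_mul (by linear_combination hsum) h4 (by omega) (by omega)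

theorem exists_four_sq_with_sum_of_emod_four_eq_two {n T : ℤ} (hn : n % 4 = 2)
    (hT : T ≡ n [ZMOD 2]) (hle : T ^ 2 ≤ 4 * n) :
    ∃ a b c d : ℤ, a ^ 2 + b ^ 2 + c ^ 2 + d ^ 2 = n ∧ a + b + c + d = T := by
  unfold Int.ModEq at hT
  obtain ⟨t, rfl⟩ : ∃ t, T = 2 * t := ⟨T / 2, by omega⟩
  have ht := Int.sq_emod_cases t
  obtain ⟨x, y, z, hxyz⟩ := Int.exists_sq_add_sq_add_sq (m := n - t ^ 2) (by nlinarith) (by omega)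
  have hx := Int.sq_emod_cases x
  have hy := Int.sq_emod_cases y
  have hz := Int.sq_emod_cases z
  exact exists_four_sq_with_sum_of_four_mul (u := 2 * x) (v := 2 * y) (w := 2 * z)
    (by linear_combination 4 * hxyz) (by omega) (by omega) (by omega)

theorem add_add_add_modEq_sq (a b c d : ℤ) :
    a + b + c + d ≡ a ^ 2 + b ^ 2 + c ^ 2 + d ^ 2 [ZMOD 2] := by
  have ha := Int.sq_emod_cases a
  have hb := Int.sq_emod_cases b
  have hc := Int.sq_emod_cases c
  have hd := Int.sq_emod_cases d
  unfold Int.ModEq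
  omega

theorem sq_add_add_add_le (a b c d : ℤ) :
    (a + b + c + d) ^ 2 ≤ 4 * (a ^ 2 + b ^ 2 + c ^ 2 + d ^ 2) := by
  nlinarith [sq_nonneg (a - b), sq_nonneg (a - c), sq_nonneg (a - d), sq_nonneg (b - c),
    sq_nonneg (b - d), sq_nonneg (c - d)]

theorem spectrum_no4_general (n : ℤ) (h4 : ¬ (4 ∣ n)) :
    {T : ℤ | ∃ a b c d : ℤ, a^2 + b^2 + c^2 + d^2 = n ∧ a + b + c + d = T}
      = {T : ℤ | T ≡ n [ZMOD 2] ∧ T^2 ≤ 4 * n} := by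
  ext T
  constructor
  · rintro ⟨a, b, c, d, rfl, rfl⟩
    exact ⟨add_add_add_modEq_sq a b c d, sq_add_add_add_le a b c d⟩
  · rintro ⟨hT, hle⟩
    rcases (by omega : n % 2 = 1 ∨ n % 4 = 2) with hn | hn
    · exact exists_four_sq_with_sum_of_odd hn hT hle
    · exact exists_four_sq_with_sum_of_emod_four_eq_two hn hT hle

theorem spectrum_no4 (n : ℤ) (hn : 0 < n) (h4 : ¬ (4 ∣ n)) :
    {T : ℤ | ∃ a b c d : ℤ, a^2 + b^2 + c^2 + d^2 = n ∧ a + b + c + d = T}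
      = {T : ℤ | T ≡ n [ZMOD 2] ∧ T^2 ≤ 4 * n} :=
  spectrum_no4_general n h4
end
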